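/- Fix reals 1 = σ_1 ≥ σ_2 ≥ … ≥ σ_d > 0, set S_d := ∏_{i=1}^d (−σ_i, σ_i], B_0 := S_d and, for n ≥ 1, B_n := ∏_{i=1}^d (−2^n σ_i, 2^n σ_i] ∖ ∏_{i=1}^d (−2^{n−1} σ_i, 2^{n−1} σ_i]. Let μ and ν be probability measures on ℝ^d, set q := Σ_{n≥0} (μ(B_n) − ν(B_n))_+ and assume q > 0; define α := Σ_{n≥0} (μ(B_n) − ν(B_n))_+ · μ|_{B_n}/μ(B_n) and β := Σ_{n≥0} (ν(B_n) − μ(B_n))_+ · ν|_{B_n}/ν(B_n). Then (1/q) ∫∫ ‖x − y‖² α(dx) β(dy) ≤ 2d Σ_{n≥0} 2^{2n} | μ(B_n) − ν(B_n) |. -/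

import Mathlib

open MeasureTheory ProbabilityTheory Real
open scoped ENNReal NNReal BigOperators

/-- Squared Wasserstein-2 distance: infimum over couplings of `∫ ‖x - y‖²`. -/
noncomputable def W2sq {E : Type*} [NormedAddCommGroup E] [MeasurableSpace E]
    (μ ν : Measure E) : ℝ :=
  sInf { r : ℝ | ∃ γ : Measure (E × E), IsProbabilityMeasure γ ∧
    γ.map Prod.fst = μ ∧ γ.map Prod.snd = ν ∧ r = ∫ p, ‖p.1 - p.2‖ ^ 2 ∂γ }

/-- Empirical measure of `N` points. -/
noncomputable def empMeasure {E : Type*} [MeasurableSpace E] {N : ℕ}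
    (y : Fin N → E) : Measure E :=
  ((N : ℝ≥0∞))⁻¹ • ∑ i, Measure.dirac (y i)

/-- Sixth-moment scale of the `i`-th coordinate: `σ_i = (∫ y_i^6 dμ)^{1/6}`. -/
noncomputable def sigma6 {d : ℕ} (μ : Measure (EuclideanSpace ℝ (Fin d))) (i : Fin d) : ℝ :=
  (∫ y, y i ^ 6 ∂μ) ^ ((1 : ℝ) / 6)

/-- `M = (∫ Σ_i y_i^6 dμ)^{1/6}`. -/
noncomputable def sixthM {d : ℕ} (μ : Measure (EuclideanSpace ℝ (Fin d))) : ℝ :=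
  (∫ y, ∑ i, y i ^ 6 ∂μ) ^ ((1 : ℝ) / 6)

/-- The box `∏_i (-c σ_i, c σ_i]`. -/
def box {d : ℕ} (σ : Fin d → ℝ) (c : ℝ) : Set (EuclideanSpace ℝ (Fin d)) :=
  {x | ∀ i, -(c * σ i) < x i ∧ x i ≤ c * σ i}

/-- The annuli `B_0 = S_d`, `B_n = ∏(-2^n σ_i, 2^n σ_i] \ ∏(-2^{n-1} σ_i, 2^{n-1} σ_i]`. -/
def Bset {d : ℕ} (σ : Fin d → ℝ) : ℕ → Set (EuclideanSpace ℝ (Fin d))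
  | 0 => box σ 1
  | n + 1 => box σ (2 ^ (n + 1)) \ box σ (2 ^ n)

/-- `R_{B}μ`: pushforward of the normalized restriction `μ|_B / μ(B)` by `x ↦ 2^{-n} x`. -/
noncomputable def RB {d : ℕ} (μ : Measure (EuclideanSpace ℝ (Fin d)))
    (B : Set (EuclideanSpace ℝ (Fin d))) (n : ℕ) : Measure (EuclideanSpace ℝ (Fin d)) :=
  Measure.map (fun x => ((2 : ℝ) ^ n)⁻¹ • x) ((μ B)⁻¹ • μ.restrict B)

/-- The grid cell `2^{1-ℓ} k + (-2^{-ℓ}, 2^{-ℓ}]^d`, `k ∈ ℤ^d`. -/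
def gridCell (d : ℕ) (ℓ : ℕ) (k : Fin d → ℤ) : Set (EuclideanSpace ℝ (Fin d)) :=
  {x | ∀ i, 2 ^ (1 - (ℓ : ℤ)) * (k i : ℝ) - 2 ^ (-(ℓ : ℤ)) < x i ∧
    x i ≤ 2 ^ (1 - (ℓ : ℤ)) * (k i : ℝ) + 2 ^ (-(ℓ : ℤ))}

/-- `D_2(μ, ν) = (3/2) Σ_{ℓ≥1} 2^{-2ℓ} Σ_{F ∈ 𝒫_ℓ} |μ(F) - ν(F)|`, where `𝒫_ℓ` is the
minimal family of level-`ℓ` grid cells covering `S_d`. -/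
noncomputable def D2dist {d : ℕ} (σ : Fin d → ℝ)
    (μ ν : Measure (EuclideanSpace ℝ (Fin d))) : ℝ :=
  (3 / 2) * ∑' ℓ : ℕ, (2 : ℝ) ^ (-2 * ((ℓ : ℤ) + 1)) *
    ∑' F : {k : Fin d → ℤ // (gridCell d (ℓ + 1) k ∩ box σ 1).Nonempty},
      |(μ (gridCell d (ℓ + 1) F.1)).toReal - (ν (gridCell d (ℓ + 1) F.1)).toReal|

/-- `𝒟_2(μ, ν) = Σ_{n≥0} 2^{2n} [ |μ(B_n) - ν(B_n)| + (μ(B_n) ∧ ν(B_n)) D_2(R_{B_n}μ, R_{B_n}ν) ]`. -/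
noncomputable def Dcal2 {d : ℕ} (σ : Fin d → ℝ)
    (μ ν : Measure (EuclideanSpace ℝ (Fin d))) : ℝ :=
  ∑' n : ℕ, (2 : ℝ) ^ (2 * n) *
    (|(μ (Bset σ n)).toReal - (ν (Bset σ n)).toReal| +
      min (μ (Bset σ n)).toReal (ν (Bset σ n)).toReal *
        D2dist σ (RB μ (Bset σ n) n) (RB ν (Bset σ n) n))

/-!
The bound `‖x - y‖² ≤ 2‖x‖² + 2‖y‖²` splits the cost of the product coupling `α ⊗ β` into the
second moments of `α` and `β`, each multiplied by the mass of the other; both masses equal `q`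
because `μ` and `ν` give the same total mass to the partition `(B_n)`. On `B_n ⊆ 2ⁿ S_d` we have
`‖x‖² ≤ d 4ⁿ`, which gives the bound.

The right-hand side is a real `tsum`, hence `0` when the series diverges. In that case the reverse
estimate `‖x‖ ≥ 2ⁿ⁻¹ min σ` on `B_n` makes the cost infinite, so the Bochner integral on the left
is `0` as well.
-/

lemma exists_pos_forall_le {ι : Type*} [Finite ι] {σ : ι → ℝ} (hσ : ∀ i, 0 < σ i) :
    ∃ s, 0 < s ∧ ∀ i, s ≤ σ i := by
  cases isEmpty_or_nonempty ι
  · exact ⟨1, one_pos, isEmptyElim⟩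
  · obtain ⟨j, hj⟩ := Finite.exists_min σ
    exact ⟨σ j, hσ j, hj⟩


namespace ENNReal

lemma tsum_tsub_comm {ι : Type*} {f g : ι → ℝ≥0∞} (h : ∑' n, f n = ∑' n, g n) (hf : ∑' n, f n ≠ ∞) :
    ∑' n, (f n - g n) = ∑' n, (g n - f n) := by
  have split : ∀ u v : ι → ℝ≥0∞, ∑' n, (u n - v n) + ∑' n, min (u n) (v n) = ∑' n, u n :=
    fun u v => by simp only [← ENNReal.tsum_add, tsub_add_min]
  have hmin : ∑' n, min (f n) (g n) ≠ ∞ :=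
    ne_top_of_le_ne_top hf (ENNReal.tsum_le_tsum fun n => min_le_left _ _)
  rw [← ENNReal.add_left_inj hmin, split, h, ← split g f]
  simp_rw [min_comm]

lemma toReal_tsub_add_tsub {a b : ℝ≥0∞} (ha : a ≠ ∞) (hb : b ≠ ∞) :
    (a - b + (b - a)).toReal = |a.toReal - b.toReal| := by
  rcases le_total a b with h | h
  · rw [tsub_eq_zero_of_le h, zero_add, toReal_sub_of_le h hb, abs_sub_comm,
      abs_of_nonneg (sub_nonneg.2 (toReal_mono hb h))]
  · rw [tsub_eq_zero_of_le h, add_zero, toReal_sub_of_le h ha,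
      abs_of_nonneg (sub_nonneg.2 (toReal_mono ha h))]

lemma inv_toReal_mul_toReal_le {L q K : ℝ≥0∞} (hL : L ≤ q * K) (hK : L ≠ ∞ → K ≠ ∞)
    (hq₀ : q ≠ 0) (hq : q ≠ ∞) : q.toReal⁻¹ * L.toReal ≤ K.toReal := by
  rcases eq_or_ne L ∞ with rfl | hL_top
  · simp
  rw [inv_mul_le_iff₀ (toReal_pos hq₀ hq), ← toReal_mul]
  exact toReal_mono (mul_ne_top hq (hK hL_top)) hL

end ENNReal

lemma enorm_add_sq_le {E : Type*} [SeminormedAddCommGroup E] (x y : E) :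
    ‖x + y‖ₑ ^ 2 ≤ 2 * (‖x‖ₑ ^ 2 + ‖y‖ₑ ^ 2) := by
  simp only [enorm_eq_nnnorm]
  exact_mod_cast (pow_le_pow_left₀ zero_le (nnnorm_add_le x y) 2).trans add_sq_le

section ProductCoupling

variable {E : Type*} [NormedAddCommGroup E] [MeasurableSpace E] [OpensMeasurableSpace E]
  {α β : Measure E}

lemma lintegral_enorm_sub_sq_prod_le [SFinite α] [SFinite β] :
    ∫⁻ p, ‖p.1 - p.2‖ₑ ^ 2 ∂α.prod β ≤
      2 * (β Set.univ * ∫⁻ x, ‖x‖ₑ ^ 2 ∂α + α Set.univ * ∫⁻ y, ‖y‖ₑ ^ 2 ∂β) := by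
  calc ∫⁻ p, ‖p.1 - p.2‖ₑ ^ 2 ∂α.prod β ≤ ∫⁻ p, 2 * (‖p.1‖ₑ ^ 2 + ‖p.2‖ₑ ^ 2) ∂α.prod β :=
        lintegral_mono fun p => by simpa [sub_eq_add_neg] using enorm_add_sq_le p.1 (-p.2)
    _ = 2 * (∫⁻ p, ‖p.1‖ₑ ^ 2 ∂α.prod β + ∫⁻ p, ‖p.2‖ₑ ^ 2 ∂α.prod β) := by
        rw [lintegral_const_mul _ (by fun_prop), lintegral_add_left (by fun_prop)]
    _ = _ := by
        rw [lintegral_prod _ (by fun_prop), lintegral_prod_symm _ (by fun_prop)]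
        simp only [lintegral_const]
        rw [lintegral_mul_const _ (by fun_prop), lintegral_mul_const _ (by fun_prop)]
        ring

variable [MeasurableSub₂ E]

lemma mul_lintegral_enorm_sq_ne_top_of_prod [IsFiniteMeasure α] [IsFiniteMeasure β]
    (h : ∫⁻ p, ‖p.1 - p.2‖ₑ ^ 2 ∂α.prod β ≠ ∞) : β Set.univ * ∫⁻ x, ‖x‖ₑ ^ 2 ∂α ≠ ∞ := by
  rcases eq_or_ne β 0 with rfl | hβ
  · simp
  refine ENNReal.mul_ne_top (measure_ne_top β _) fun htop => h ?_
  have hinner : ∀ y, ∫⁻ x, ‖x - y‖ₑ ^ 2 ∂α = ∞ := fun y => by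
    by_contra hy
    have hbound : ∫⁻ x, ‖x‖ₑ ^ 2 ∂α ≤ 2 * (∫⁻ x, ‖x - y‖ₑ ^ 2 ∂α + ‖y‖ₑ ^ 2 * α Set.univ) := by
      rw [← lintegral_const, ← lintegral_add_left (by fun_prop),
        ← lintegral_const_mul _ (by fun_prop)]
      exact lintegral_mono fun x => by simpa using enorm_add_sq_le (x - y) y
    exact htop.not_lt (hbound.trans_lt (by finiteness))
  rw [lintegral_prod_symm _ (by fun_prop)]
  simp [hinner, hβ]

end ProductCoupling

namespace MeasureTheory.Measure

variable {E : Type*} [MeasurableSpace E]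

noncomputable def restrictMixture (μ : Measure E) (B : ℕ → Set E) (w : ℕ → ℝ≥0∞) : Measure E :=
  Measure.sum fun n => w n • ((μ (B n))⁻¹ • μ.restrict (B n))

instance {μ : Measure E} [SFinite μ] {B : ℕ → Set E} {w : ℕ → ℝ≥0∞} :
    SFinite (restrictMixture μ B w) := by
  unfold restrictMixture; infer_instance

variable {μ : Measure E} {B : ℕ → Set E} {w : ℕ → ℝ≥0∞} {f : E → ℝ≥0∞} {C : ℕ → ℝ≥0∞}

lemma lintegral_restrictMixture_le (hfC : ∀ n, ∀ x ∈ B n, f x ≤ C n) :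
    ∫⁻ x, f x ∂restrictMixture μ B w ≤ ∑' n, w n * C n := by
  rw [restrictMixture, lintegral_sum_measure]
  refine ENNReal.tsum_le_tsum fun n => ?_
  rw [lintegral_smul_measure, lintegral_smul_measure, smul_eq_mul, smul_eq_mul]
  gcongr
  calc (μ (B n))⁻¹ * ∫⁻ x in B n, f x ∂μ ≤ (μ (B n))⁻¹ * (C n * μ (B n)) := by
        gcongr
        exact (setLIntegral_mono measurable_const (hfC n)).trans_eq (setLIntegral_const _ _)
    _ ≤ C n := by
        rw [mul_comm, mul_assoc]
        exact mul_le_of_le_one_right' (ENNReal.mul_inv_le_one _)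

lemma tsum_le_lintegral_restrictMixture [IsFiniteMeasure μ] (hw : ∀ n, w n ≤ μ (B n))
    (hf : Measurable f) (hCf : ∀ n, ∀ x ∈ B n, C n ≤ f x) :
    ∑' n, w n * C n ≤ ∫⁻ x, f x ∂restrictMixture μ B w := by
  rw [restrictMixture, lintegral_sum_measure]
  refine ENNReal.tsum_le_tsum fun n => ?_
  rw [lintegral_smul_measure, lintegral_smul_measure, smul_eq_mul, smul_eq_mul]
  rcases eq_or_ne (μ (B n)) 0 with h0 | h0
  · simp [le_antisymm (h0 ▸ hw n) zero_le]
  gcongr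
  calc C n = (μ (B n))⁻¹ * (C n * μ (B n)) := by
        rw [mul_comm, mul_assoc, ENNReal.mul_inv_cancel h0 (measure_ne_top μ _), mul_one]
    _ ≤ (μ (B n))⁻¹ * ∫⁻ x in B n, f x ∂μ := by
        gcongr
        exact (setLIntegral_const _ _).symm.trans_le (setLIntegral_mono hf (hCf n))

lemma restrictMixture_apply_univ [IsFiniteMeasure μ] (hw : ∀ n, w n ≤ μ (B n)) :
    restrictMixture μ B w Set.univ = ∑' n, w n := by
  rw [← lintegral_one]
  refine le_antisymm ?_ ?_
  · simpa using lintegral_restrictMixture_le (C := 1) (fun _ _ _ => le_rfl)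
  · simpa using tsum_le_lintegral_restrictMixture (C := 1) hw measurable_const (fun _ _ _ => le_rfl)

end MeasureTheory.Measure

section Boxes

variable {d : ℕ} {σ : Fin d → ℝ} {x : EuclideanSpace ℝ (Fin d)}

lemma measurableSet_box (σ : Fin d → ℝ) (c : ℝ) : MeasurableSet (box σ c) := by
  have : box σ c = ⋂ i, (fun x : EuclideanSpace ℝ (Fin d) => x i) ⁻¹'
      Set.Ioc (-(c * σ i)) (c * σ i) := by
    ext x; simp [box]
  rw [this]
  exact .iInter fun i => measurableSet_Ioc.preimage (by fun_prop)

lemma box_mono (hσ : ∀ i, 0 ≤ σ i) : Monotone (box σ) := fun c c' h x hx i =>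
  have := mul_le_mul_of_nonneg_right h (hσ i)
  ⟨by linarith [(hx i).1], (hx i).2.trans this⟩

lemma Bset_eq_disjointed (hσ : ∀ i, 0 ≤ σ i) : Bset σ = disjointed fun n => box σ (2 ^ n) := by
  have hmono : Monotone fun n : ℕ => box σ (2 ^ n) :=
    (box_mono hσ).comp fun _ _ h => pow_le_pow_right₀ one_le_two h
  funext n
  cases n with
  | zero => simp [Bset]
  | succ n => rw [hmono.disjointed_add_one]; rfl

lemma mem_box_of_norm_lt {s c : ℝ} (hsσ : ∀ i, s ≤ σ i) (hc : 0 ≤ c) (hx : ‖x‖ < c * s) :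
    x ∈ box σ c := fun i => by
  have hxi : |x i| < c * σ i :=
    (PiLp.norm_apply_le x i).trans_lt (hx.trans_le (mul_le_mul_of_nonneg_left (hsσ i) hc))
  exact ⟨(abs_lt.1 hxi).1, (abs_lt.1 hxi).2.le⟩

lemma iUnion_box_two_pow (hσ : ∀ i, 0 < σ i) : ⋃ n : ℕ, box σ (2 ^ n) = Set.univ := by
  obtain ⟨s, hs, hsσ⟩ := exists_pos_forall_le hσ
  refine Set.eq_univ_of_forall fun x => Set.mem_iUnion.2 ?_
  obtain ⟨n, hn⟩ := pow_unbounded_of_one_lt (‖x‖ / s) one_lt_two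
  exact ⟨n, mem_box_of_norm_lt hsσ (by positivity) ((div_lt_iff₀ hs).1 hn)⟩

lemma tsum_measure_Bset (hσ : ∀ i, 0 < σ i) (μ : Measure (EuclideanSpace ℝ (Fin d))) :
    ∑' n, μ (Bset σ n) = μ Set.univ := by
  rw [Bset_eq_disjointed fun i => (hσ i).le, ← measure_iUnion (disjoint_disjointed _)
    (.disjointed fun _ => measurableSet_box σ _), iUnion_disjointed, iUnion_box_two_pow hσ]

lemma norm_sq_le_of_mem_box (hσ : ∀ i, σ i ≤ 1) {c : ℝ} (hc : 0 ≤ c) (hx : x ∈ box σ c) :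
    ‖x‖ ^ 2 ≤ d * c ^ 2 := by
  have hxi : ∀ i, ‖x i‖ ^ 2 ≤ c ^ 2 := fun i => by
    have := mul_le_of_le_one_right hc (hσ i)
    rw [Real.norm_eq_abs, sq_abs]
    exact sq_le_sq' (by linarith [(hx i).1]) (by linarith [(hx i).2])
  calc ‖x‖ ^ 2 = ∑ i, ‖x i‖ ^ 2 := EuclideanSpace.norm_sq_eq x
    _ ≤ ∑ _i : Fin d, c ^ 2 := Finset.sum_le_sum fun i _ => hxi i
    _ = d * c ^ 2 := by simp

lemma norm_sq_le_of_mem_Bset (hσ : ∀ i, σ i ≤ 1) {n : ℕ} (hx : x ∈ Bset σ n) :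
    ‖x‖ ^ 2 ≤ d * 4 ^ n := by
  have hsub : Bset σ n ⊆ box σ (2 ^ n) := by
    cases n with
    | zero => simp [Bset]
    | succ n => exact Set.sdiff_subset
  have := norm_sq_le_of_mem_box hσ (by positivity) (hsub hx)
  rwa [← pow_mul, mul_comm n, pow_mul, show (2 : ℝ) ^ 2 = 4 by norm_num] at this

lemma sq_mul_four_pow_le_of_mem_Bset {s : ℝ} (hs : 0 ≤ s) (hsσ : ∀ i, s ≤ σ i) {n : ℕ}
    (hx : x ∈ Bset σ n) : s ^ 2 * 4 ^ n ≤ 4 * ‖x‖ ^ 2 + s ^ 2 := by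
  -- the summand `s ^ 2` is only needed for `n = 0`, where `B_0` contains the origin
  cases n with
  | zero => simp
  | succ n =>
    have h : 2 ^ n * s ≤ ‖x‖ := not_lt.1 fun h => hx.2 (mem_box_of_norm_lt hsσ (by positivity) h)
    have := pow_le_pow_left₀ (by positivity) h 2
    rw [mul_pow, ← pow_mul, mul_comm n, pow_mul, show (2 : ℝ) ^ 2 = 4 by norm_num] at this
    rw [pow_succ (4 : ℝ)]
    nlinarith

end Boxes

section MixtureOfAnnuli

open Measure

variable {d : ℕ} {σ : Fin d → ℝ} {μ : Measure (EuclideanSpace ℝ (Fin d))} {w : ℕ → ℝ≥0∞}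

lemma lintegral_enorm_sq_restrictMixture_Bset_le (hσ : ∀ i, σ i ≤ 1) :
    ∫⁻ x, ‖x‖ₑ ^ 2 ∂restrictMixture μ (Bset σ) w ≤ d * ∑' n, w n * 4 ^ n := by
  refine (lintegral_restrictMixture_le (C := fun n => d * 4 ^ n) fun n x hx => ?_).trans_eq ?_
  · rw [← ofReal_norm, ← ENNReal.ofReal_pow (norm_nonneg _)]
    exact ENNReal.ofReal_le_of_le_toReal (by simpa using norm_sq_le_of_mem_Bset hσ hx)
  · rw [← ENNReal.tsum_mul_left]
    congr 1 with n
    ring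

lemma tsum_mul_four_pow_ne_top_of_lintegral_ne_top [IsFiniteMeasure μ] (hσ : ∀ i, 0 < σ i)
    (hw : ∀ n, w n ≤ μ (Bset σ n))
    (h : ∫⁻ x, ‖x‖ₑ ^ 2 ∂restrictMixture μ (Bset σ) w ≠ ∞) : ∑' n, w n * 4 ^ n ≠ ∞ := by
  obtain ⟨s, hs, hsσ⟩ := exists_pos_forall_le hσ
  set S := ENNReal.ofReal (s ^ 2)
  have hS : S ≠ 0 := by simp [S]; positivity
  have hmass : restrictMixture μ (Bset σ) w Set.univ ≠ ∞ := by
    rw [restrictMixture_apply_univ hw]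
    exact ne_top_of_le_ne_top (measure_ne_top μ Set.univ)
      ((ENNReal.tsum_le_tsum hw).trans_eq (tsum_measure_Bset hσ μ))
  have hlow : ∑' n, w n * (S * 4 ^ n) ≤ ∫⁻ x, 4 * ‖x‖ₑ ^ 2 + S ∂restrictMixture μ (Bset σ) w := by
    refine tsum_le_lintegral_restrictMixture hw (by fun_prop) fun n x hx => ?_
    have := ENNReal.ofReal_le_ofReal (sq_mul_four_pow_le_of_mem_Bset hs.le hsσ hx)
    rwa [ENNReal.ofReal_add (by positivity) (by positivity), ENNReal.ofReal_mul (by positivity),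
      ENNReal.ofReal_mul (by norm_num), ENNReal.ofReal_pow (norm_nonneg _), ofReal_norm,
      ENNReal.ofReal_pow (by norm_num : (0 : ℝ) ≤ 4) n, ENNReal.ofReal_ofNat] at this
  have hfin : ∫⁻ x, 4 * ‖x‖ₑ ^ 2 + S ∂restrictMixture μ (Bset σ) w ≠ ∞ := by
    rw [lintegral_add_right _ measurable_const, lintegral_const_mul _ (by fun_prop),
      lintegral_const]
    exact ENNReal.add_ne_top.2 ⟨ENNReal.mul_ne_top (by norm_num) h,
      ENNReal.mul_ne_top ENNReal.ofReal_ne_top hmass⟩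
  intro htop
  refine hfin (top_le_iff.1 (Eq.trans_le ?_ hlow))
  simp_rw [mul_left_comm (w _) S]
  rw [ENNReal.tsum_mul_left, htop, ENNReal.mul_top hS]

end MixtureOfAnnuli

section CouplingOfMixtures

open Measure

variable {d : ℕ} {σ : Fin d → ℝ} {μ ν : Measure (EuclideanSpace ℝ (Fin d))} {w w' : ℕ → ℝ≥0∞}
  {q : ℝ≥0∞}

lemma lintegral_enorm_sub_sq_prod_restrictMixture_le [IsFiniteMeasure μ] [IsFiniteMeasure ν]
    (hσ : ∀ i, σ i ≤ 1) (hw : ∀ n, w n ≤ μ (Bset σ n)) (hw' : ∀ n, w' n ≤ ν (Bset σ n))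
    (hmass : ∑' n, w n = q) (hmass' : ∑' n, w' n = q) :
    ∫⁻ p, ‖p.1 - p.2‖ₑ ^ 2 ∂(restrictMixture μ (Bset σ) w).prod (restrictMixture ν (Bset σ) w') ≤
      q * (2 * d * ∑' n, (w n + w' n) * 4 ^ n) := by
  refine lintegral_enorm_sub_sq_prod_le.trans ?_
  rw [restrictMixture_apply_univ hw, restrictMixture_apply_univ hw', hmass, hmass']
  calc _ ≤ 2 * (q * (d * ∑' n, w n * 4 ^ n) + q * (d * ∑' n, w' n * 4 ^ n)) := by
        gcongr <;> exact lintegral_enorm_sq_restrictMixture_Bset_le hσ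
    _ = q * (2 * d * ∑' n, (w n + w' n) * 4 ^ n) := by
        simp_rw [add_mul]
        rw [ENNReal.tsum_add]
        ring

lemma tsum_add_mul_four_pow_ne_top_of_lintegral_prod_ne_top [IsFiniteMeasure μ]
    [IsFiniteMeasure ν] (hσ : ∀ i, 0 < σ i) (hw : ∀ n, w n ≤ μ (Bset σ n))
    (hw' : ∀ n, w' n ≤ ν (Bset σ n))
    (hmass : ∑' n, w n = q) (hmass' : ∑' n, w' n = q) (hq₀ : q ≠ 0) (hq : q ≠ ∞)
    (h : ∫⁻ p, ‖p.1 - p.2‖ₑ ^ 2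
      ∂(restrictMixture μ (Bset σ) w).prod (restrictMixture ν (Bset σ) w') ≠ ∞) :
    ∑' n, (w n + w' n) * 4 ^ n ≠ ∞ := by
  have hρ : restrictMixture μ (Bset σ) w Set.univ = q := by
    rw [restrictMixture_apply_univ hw, hmass]
  have hρ' : restrictMixture ν (Bset σ) w' Set.univ = q := by
    rw [restrictMixture_apply_univ hw', hmass']
  have : IsFiniteMeasure (restrictMixture μ (Bset σ) w) := ⟨hρ ▸ hq.lt_top⟩
  have : IsFiniteMeasure (restrictMixture ν (Bset σ) w') := ⟨hρ' ▸ hq.lt_top⟩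
  have h_swap : ∫⁻ p, ‖p.1 - p.2‖ₑ ^ 2
      ∂(restrictMixture ν (Bset σ) w').prod (restrictMixture μ (Bset σ) w) ≠ ∞ := by
    rw [← lintegral_prod_swap]
    simpa [enorm_sub_rev] using h
  have hM := mul_lintegral_enorm_sq_ne_top_of_prod h
  have hM' := mul_lintegral_enorm_sq_ne_top_of_prod h_swap
  rw [hρ'] at hM
  rw [hρ] at hM'
  simp_rw [add_mul]
  rw [ENNReal.tsum_add]
  refine ENNReal.add_ne_top.2 ⟨tsum_mul_four_pow_ne_top_of_lintegral_ne_top hσ hw fun htop => ?_,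
    tsum_mul_four_pow_ne_top_of_lintegral_ne_top hσ hw' fun htop => ?_⟩
  · exact hM (by rw [htop, ENNReal.mul_top hq₀])
  · exact hM' (by rw [htop, ENNReal.mul_top hq₀])

end CouplingOfMixtures

/-- cost bound for the product remainder term of the glued coupling. -/
theorem stmt9 (d : ℕ) (hd : 0 < d) (σ : Fin d → ℝ)
    (hσ1 : σ ⟨0, hd⟩ = 1) (hσmono : ∀ i j : Fin d, i ≤ j → σ j ≤ σ i)
    (hσpos : ∀ i, 0 < σ i)
    (μ ν : Measure (EuclideanSpace ℝ (Fin d)))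
    [IsProbabilityMeasure μ] [IsProbabilityMeasure ν]
    (q : ℝ≥0∞) (hq : q = ∑' n, (μ (Bset σ n) - ν (Bset σ n))) (hqpos : 0 < q) :
    (let a : Measure (EuclideanSpace ℝ (Fin d)) :=
        Measure.sum fun n =>
          (μ (Bset σ n) - ν (Bset σ n)) • ((μ (Bset σ n))⁻¹ • μ.restrict (Bset σ n));
      let b : Measure (EuclideanSpace ℝ (Fin d)) :=
        Measure.sum fun n =>
          (ν (Bset σ n) - μ (Bset σ n)) • ((ν (Bset σ n))⁻¹ • ν.restrict (Bset σ n));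
      q.toReal⁻¹ * ∫ p, ‖p.1 - p.2‖ ^ 2 ∂(a.prod b) ≤
        2 * d * ∑' n : ℕ, (2 : ℝ) ^ (2 * n) *
          |(μ (Bset σ n)).toReal - (ν (Bset σ n)).toReal|) := by
  set w : ℕ → ℝ≥0∞ := fun n => μ (Bset σ n) - ν (Bset σ n)
  set w' : ℕ → ℝ≥0∞ := fun n => ν (Bset σ n) - μ (Bset σ n)
  change q.toReal⁻¹ * ∫ p, ‖p.1 - p.2‖ ^ 2
    ∂(Measure.restrictMixture μ (Bset σ) w).prod (Measure.restrictMixture ν (Bset σ) w') ≤ _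
  have hw : ∀ n, w n ≤ μ (Bset σ n) := fun n => tsub_le_self
  have hw' : ∀ n, w' n ≤ ν (Bset σ n) := fun n => tsub_le_self
  have hσ_le_one : ∀ i, σ i ≤ 1 := fun i => hσ1 ▸ hσmono ⟨0, hd⟩ i (Nat.zero_le _)
  have hμ : ∑' n, μ (Bset σ n) = 1 := by rw [tsum_measure_Bset hσpos, measure_univ]
  have hν : ∑' n, ν (Bset σ n) = 1 := by rw [tsum_measure_Bset hσpos, measure_univ]
  have hmass' : ∑' n, w' n = q := by
    rw [hq, ENNReal.tsum_tsub_comm (hμ.trans hν.symm) (hμ ▸ ENNReal.one_ne_top)]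
  have hq_top : q ≠ ∞ := ne_top_of_le_ne_top (hμ ▸ ENNReal.one_ne_top)
    (hq ▸ ENNReal.tsum_le_tsum hw)
  rw [integral_eq_lintegral_of_nonneg_ae (ae_of_all _ fun _ => by positivity) (by fun_prop)]
  simp_rw [ENNReal.ofReal_pow (norm_nonneg _), ofReal_norm]
  calc _ ≤ (2 * d * ∑' n, (w n + w' n) * 4 ^ n).toReal :=
        ENNReal.inv_toReal_mul_toReal_le
          (lintegral_enorm_sub_sq_prod_restrictMixture_le hσ_le_one hw hw' hq.symm hmass')
          (fun hL => ENNReal.mul_ne_top (by finiteness) <|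
            tsum_add_mul_four_pow_ne_top_of_lintegral_prod_ne_top hσpos hw hw' hq.symm hmass'
              hqpos.ne' hq_top hL)
          hqpos.ne' hq_top
    _ = _ := by
        rw [ENNReal.toReal_mul, ENNReal.tsum_toReal_eq fun n => by finiteness]
        congr 1
        refine tsum_congr fun n => ?_
        rw [ENNReal.toReal_mul, ENNReal.toReal_tsub_add_tsub (measure_ne_top _ _)
          (measure_ne_top _ _), mul_comm, pow_mul]
        norm_num
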